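/- Let F ⊆ ℤ^ω × ω^ω be a closed set whose projection A = proj_{ℤ^ω}(F) is not Haar-null, and let ψ : 2^ω → K(ℤ^ω × ω^ω) be any bijection from the Cantor space onto the family of compact subsets of ℤ^ω × ω^ω. Define a partial map φ on triples (b,t,c) ∈ ω^ω × ℤ^ω × ℤ^ω by: (b,t,c) ∈ dom(φ) iff (1) c − t ∈ 2^ω (i.e., every coordinate of c − t is 0 or 1), (2) 2b(n) ≤ |t(n)| for all but finitely many n, (3) proj_{ℤ^ω}(ψ(c−t)) ⊆ Π_{n∈ω}[0, b(n)], and (4) μ_b(proj_{ℤ^ω}(ψ(c−t))) > 0; and in that case φ(b,t,c) = ψ(c−t) +^p t = {(r+t, x) : (r,x) ∈ ψ(c−t)}. Let bij : ω^ω → ω^ω × ℤ^ω × ℤ^ω be the homeomorphism given by bij(f)(0)(n) = f(3n) and, for i ∈ {1,2}, bij(f)(i)(n) = f(3n+i)/2 if f(3n+i) is even and −(f(3n+i)+1)/2 if f(3n+i) is odd. Then the set D = {f ∈ ω^ω : bij(f) ∈ dom(φ) and φ(bij(f)) ⊆ F} is a dominating subset of ω^ω. -/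

import Mathlib

open MeasureTheory Filter

noncomputable section

/-- A subset of `ℤ^ω` is universally measurable if it is measurable with respect to the
completion of every Borel probability measure on `ℤ^ω`. -/
def UnivMeasurable (U : Set (ℕ → ℤ)) : Prop :=
  ∀ μ : Measure (ℕ → ℤ), IsProbabilityMeasure μ → NullMeasurableSet U μ

/-- Christensen's notion: `S ⊆ ℤ^ω` is Haar-null if there are a universally measurable
`U ⊇ S` and a Borel probability measure `μ` with `μ (U + g) = 0` for every `g ∈ ℤ^ω`. -/
def IsHaarNull (S : Set (ℕ → ℤ)) : Prop :=
  ∃ (U : Set (ℕ → ℤ)) (μ : Measure (ℕ → ℤ)),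
    S ⊆ U ∧ UnivMeasurable U ∧ IsProbabilityMeasure μ ∧
    ∀ g : ℕ → ℤ, μ ((fun x => x + g) '' U) = 0

/-- Eventual domination `f ≤* g`: `f n ≤ g n` for all but finitely many `n`. -/
def EvLE (f g : ℕ → ℕ) : Prop := ∀ᶠ n in atTop, f n ≤ g n

/-- A dominating family in Baire space. -/
def Dominating (S : Set (ℕ → ℕ)) : Prop := ∀ f : ℕ → ℕ, ∃ g ∈ S, EvLE f g

/-- `∏_{i<n} (b i + 1)`. -/
def basePow (b : ℕ → ℕ) (n : ℕ) : ℕ := ∏ i ∈ Finset.range n, (b i + 1)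

/-- The digits of `x ∈ [0,1)` in the mixed-radix expansion with bases `b n + 1`;
the `n`-th digit is uniformly distributed on `{0, …, b n}`, and the digits are independent. -/
def digitMap (b : ℕ → ℕ) (x : ℝ) : ℕ → ℤ :=
  fun n => ⌊x * (basePow b (n + 1) : ℝ)⌋ - (b n + 1) * ⌊x * (basePow b n : ℝ)⌋

/-- `μ_b`: the product probability measure on `ℤ^ω` whose `n`-th factor is the uniform
probability measure on `{0, 1, …, b n} ⊆ ℤ`, realized as the joint distribution of the
mixed-radix digits (with bases `b n + 1`) of a uniformly random point of `[0,1)`.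
(Applied to an arbitrary set it gives the outer measure `μ_b^*`.) -/
def muB (b : ℕ → ℕ) : Measure (ℕ → ℤ) :=
  Measure.map (digitMap b) (volume.restrict (Set.Ico (0 : ℝ) 1))

end

/-- The standard bijection `ℕ → ℤ` sending even `k` to `k/2` and odd `k` to `−(k+1)/2`. -/
def natToInt (k : ℕ) : ℤ :=
  if k % 2 = 0 then ((k / 2 : ℕ) : ℤ) else -(((k + 1) / 2 : ℕ) : ℤ)

/-- The homeomorphism `bij : ω^ω → ω^ω × ℤ^ω × ℤ^ω`,
`bij(f) = (n ↦ f(3n), n ↦ natToInt (f(3n+1)), n ↦ natToInt (f(3n+2)))`. -/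
def bijMap (f : ℕ → ℕ) : (ℕ → ℕ) × (ℕ → ℤ) × (ℕ → ℤ) :=
  (fun n => f (3 * n), fun n => natToInt (f (3 * n + 1)), fun n => natToInt (f (3 * n + 2)))

/-!
Fix `f` and let `q n` bound `f` on `{3n, 3n+1, 3n+2}`; put `M n = 5 * 2 ^ n` and
`b n + 1 = (M n + 1) * (q n + 1)`. Projections of closed sets are universally measurable and are
approximated from inside by projections of compact subsets (capacitability: bound the `ω^ω`
coordinates greedily, one at a time). As `A` is not Haar-null, some `A + s` has positive
`μ_b`-measure, hence so does the projection of a compact `K ⊆ F - s`. Splitting each digit as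
`(q n + 1) * j n + d n` exhibits `μ_b` as the image of `μ_M ⊗ μ_q`, so by Fubini some `j` has a
section of positive `μ_q`-measure. At most five values of `j n` give
`|(q n + 1) * j n - s n| ≤ 2 * q n`, each of `μ_M`-mass below `2⁻ⁿ / 5`, so by Borel–Cantelli
`j` can be chosen to avoid them eventually. Moving the section by `(q + 1) * j` gives a compact
set `ψ z`, and with `t = (q + 1) * j - s` the code of `(q, t, t + z)` lies in `D` and
dominates `f`.
-/

open Set Topology
open scoped ENNReal

section Digits

variable {b : ℕ → ℕ}

lemma basePow_succ (b : ℕ → ℕ) (n : ℕ) : basePow b (n + 1) = basePow b n * (b n + 1) :=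
  Finset.prod_range_succ _ _

lemma basePow_pos (b : ℕ → ℕ) (n : ℕ) : 0 < basePow b n :=
  Finset.prod_pos fun _ _ => Nat.succ_pos _

lemma floor_mul_basePow_succ (x : ℝ) (n : ℕ) :
    ⌊x * basePow b (n + 1)⌋ = (b n + 1) * ⌊x * basePow b n⌋ + digitMap b x n := by
  simp only [digitMap]; ring

lemma eq_and_eq_of_mul_add_eq {B u v u' v' : ℤ} (h : (B + 1) * u + v = (B + 1) * u' + v')
    (hv : v ∈ Icc 0 B) (hv' : v' ∈ Icc 0 B) : u = u' ∧ v = v' := by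
  have hB : 0 < B + 1 := by linarith [hv.1, hv.2]
  have key : ∀ u v, v ∈ Icc 0 B →
      ((B + 1) * u + v) / (B + 1) = u ∧ ((B + 1) * u + v) % (B + 1) = v :=
    fun u v hv => (Int.ediv_emod_unique hB).2 ⟨by ring, hv.1, by linarith [hv.2]⟩
  obtain ⟨h1, h2⟩ := key u v hv
  obtain ⟨h3, h4⟩ := key u' v' hv'
  rw [h] at h1 h2
  exact ⟨h1.symm.trans h3, h2.symm.trans h4⟩

lemma digitMap_mem_Icc (x : ℝ) (n : ℕ) : digitMap b x n ∈ Icc 0 (b n : ℤ) := by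
  have hsucc : x * basePow b (n + 1) = x * basePow b n * ((b n : ℝ) + 1) := by
    rw [basePow_succ]; push_cast; ring
  have hlo := Int.floor_le (x * basePow b n)
  have hhi := Int.lt_floor_add_one (x * basePow b n)
  have h1 : (b n + 1) * ⌊x * basePow b n⌋ ≤ ⌊x * basePow b (n + 1)⌋ := by
    rw [hsucc, Int.le_floor]; push_cast; nlinarith
  have h2 : ⌊x * basePow b (n + 1)⌋ < (b n + 1) * ⌊x * basePow b n⌋ + (b n + 1) := by
    rw [hsucc, Int.floor_lt]; push_cast; nlinarith
  rw [floor_mul_basePow_succ] at h1 h2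
  constructor <;> linarith

lemma measurable_digitMap (b : ℕ → ℕ) : Measurable (digitMap b) :=
  measurable_pi_lambda _ fun _ =>
    (Int.measurable_floor.comp (measurable_id.mul_const _)).sub
      ((Int.measurable_floor.comp (measurable_id.mul_const _)).const_mul _)

instance (b : ℕ → ℕ) : IsProbabilityMeasure (muB b) :=
  haveI : IsProbabilityMeasure (volume.restrict (Ico (0 : ℝ) 1)) :=
    ⟨by simp [Measure.restrict_apply, Real.volume_Ico]⟩
  Measure.isProbabilityMeasure_map (measurable_digitMap b).aemeasurable

lemma muB_apply {S : Set (ℕ → ℤ)} (hS : MeasurableSet S) :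
    muB b S = volume (digitMap b ⁻¹' S ∩ Ico 0 1) := by
  rw [muB, Measure.map_apply (measurable_digitMap b) hS,
    Measure.restrict_apply (measurable_digitMap b hS)]

def digitsValue (b : ℕ → ℕ) (a : ℕ → ℤ) : ℕ → ℤ
  | 0 => 0
  | n + 1 => (b n + 1) * digitsValue b a n + a n

lemma digitsValue_mem_Ico {a : ℕ → ℤ} {n : ℕ} (ha : ∀ i < n, a i ∈ Icc 0 (b i : ℤ)) :
    digitsValue b a n ∈ Ico 0 (basePow b n : ℤ) := by
  induction n with
  | zero => simp [digitsValue, basePow]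
  | succ n ih =>
    obtain ⟨h0, h1⟩ := ih fun i hi => ha i (by omega)
    obtain ⟨h2, h3⟩ := ha n (by omega)
    have hsucc : (basePow b (n + 1) : ℤ) = basePow b n * (b n + 1) := by
      rw [basePow_succ]; push_cast; ring
    simp only [digitsValue, mem_Ico, hsucc]
    constructor <;> nlinarith

lemma digitMap_eq_iff {x : ℝ} (hx : x ∈ Ico (0 : ℝ) 1) {a : ℕ → ℤ} {n : ℕ}
    (ha : ∀ i < n, a i ∈ Icc 0 (b i : ℤ)) :
    (∀ i < n, digitMap b x i = a i) ↔ ⌊x * basePow b n⌋ = digitsValue b a n := by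
  induction n with
  | zero => simp [basePow, digitsValue, Int.floor_eq_zero_iff.mpr hx]
  | succ n ih =>
    rw [floor_mul_basePow_succ, digitsValue]
    constructor
    · intro hd
      rw [(ih fun i hi => ha i (by omega)).1 fun i hi => hd i (by omega), hd n (by omega)]
    · intro h
      obtain ⟨hprefix, hlast⟩ :=
        eq_and_eq_of_mul_add_eq h (digitMap_mem_Icc x n) (ha n (by omega))
      intro i hi
      rcases Nat.lt_succ_iff_lt_or_eq.mp hi with hi | rfl
      · exact (ih fun i hi => ha i (by omega)).2 hprefix i hi
      · exact hlast

lemma volume_floor_mul_eq {N : ℕ} (hN : 0 < N) {r : ℤ} (hr : r ∈ Ico 0 (N : ℤ)) :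
    volume {x ∈ Ico (0 : ℝ) 1 | ⌊x * N⌋ = r} = (N : ℝ≥0∞)⁻¹ := by
  have hN' : (0 : ℝ) < N := by exact_mod_cast hN
  have hr' : (r : ℝ) + 1 ≤ N := by exact_mod_cast hr.2
  have hr0 : (0 : ℝ) ≤ r := by exact_mod_cast hr.1
  have hset : {x ∈ Ico (0 : ℝ) 1 | ⌊x * N⌋ = r} = Ico (r / N : ℝ) ((r + 1) / N) := by
    ext x
    simp only [mem_ofPred_eq, mem_Ico, Int.floor_eq_iff, div_le_iff₀ hN', lt_div_iff₀ hN']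
    constructor
    · rintro ⟨-, h⟩; exact h
    · rintro ⟨h1, h2⟩
      refine ⟨⟨?_, ?_⟩, h1, h2⟩ <;> nlinarith
  rw [hset, Real.volume_Ico, ← sub_div, add_sub_cancel_left, ENNReal.ofReal_div_of_pos hN']
  simp

end Digits

section PrefixCylinder

def prefixCylinder (n : ℕ) (a : ℕ → ℤ) : Set (ℕ → ℤ) := {g | ∀ i < n, g i = a i}

lemma measurableSet_prefixCylinder (n : ℕ) (a : ℕ → ℤ) :
    MeasurableSet (prefixCylinder n a) := by
  have : prefixCylinder n a = ⋂ i ∈ Finset.range n, (fun g : ℕ → ℤ => g i) ⁻¹' {a i} := by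
    ext g; simp [prefixCylinder]
  rw [this]
  exact Finset.measurableSet_biInter _ fun i _ => measurable_pi_apply i (measurableSet_singleton _)

lemma isPiSystem_prefixCylinders : IsPiSystem {C | ∃ n a, C = prefixCylinder n a} := by
  have key : ∀ {n n' a a'}, n ≤ n' →
      (prefixCylinder n a ∩ prefixCylinder n' a').Nonempty →
      prefixCylinder n a ∩ prefixCylinder n' a' = prefixCylinder n' a' := by
    rintro n n' a a' hn ⟨g, hga, hga'⟩
    refine inter_eq_right.2 fun g' hg' i hi => ?_
    rw [hg' i (by omega), ← hga' i (by omega), hga i hi]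
  rintro s ⟨n, a, rfl⟩ t ⟨n', a', rfl⟩ hst
  rcases le_total n n' with hn | hn
  · exact ⟨n', a', key hn hst⟩
  · exact ⟨n, a, by rw [inter_comm] at hst ⊢; exact key hn hst⟩

lemma countable_setOf_forall_le_eq_zero {α : Type*} [Countable α] [Zero α] (n : ℕ) :
    {w : ℕ → α | ∀ i, n ≤ i → w i = 0}.Countable := by
  refine (countable_range fun (u : Fin n → α) i => if h : i < n then u ⟨i, h⟩ else 0).mono ?_
  intro w hw
  refine ⟨fun i => w i, funext fun i => ?_⟩
  by_cases h : i < n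
  · simp [h]
  · simp [h, hw i (not_lt.1 h)]

lemma preimage_eval_eq_biUnion_prefixCylinder (k : ℕ) (s : Set ℤ) :
    (fun g : ℕ → ℤ => g k) ⁻¹' s =
      ⋃ w ∈ {w : ℕ → ℤ | w k ∈ s} ∩ {w | ∀ i, k + 1 ≤ i → w i = 0},
        prefixCylinder (k + 1) w := by
  ext g
  simp only [mem_preimage, mem_iUnion, mem_inter_iff, mem_ofPred_eq, exists_prop, prefixCylinder]
  constructor
  · intro hg
    refine ⟨fun i => if i ≤ k then g i else 0, ⟨by simpa using hg, fun i hi => ?_⟩,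
      fun i hi => ?_⟩
    · simp [show ¬ i ≤ k by omega]
    · simp [show i ≤ k by omega]
  · rintro ⟨w, ⟨hw, -⟩, hgw⟩
    rwa [hgw k k.lt_succ_self]

lemma generateFrom_prefixCylinders :
    MeasurableSpace.generateFrom {C | ∃ n a, C = prefixCylinder n a} = MeasurableSpace.pi := by
  refine le_antisymm (MeasurableSpace.generateFrom_le ?_) (iSup_le fun k => ?_)
  · rintro _ ⟨n, a, rfl⟩
    exact measurableSet_prefixCylinder n a
  · rintro _ ⟨s, -, rfl⟩
    rw [preimage_eval_eq_biUnion_prefixCylinder]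
    exact MeasurableSet.biUnion ((countable_setOf_forall_le_eq_zero _).mono inter_subset_right)
      fun w _ => MeasurableSpace.measurableSet_generateFrom ⟨k + 1, w, rfl⟩

lemma ext_of_prefixCylinder {μ ν : Measure (ℕ → ℤ)} [IsProbabilityMeasure μ]
    [IsProbabilityMeasure ν] (h : ∀ n a, μ (prefixCylinder n a) = ν (prefixCylinder n a)) :
    μ = ν := by
  refine ext_of_generate_finite _ generateFrom_prefixCylinders.symm isPiSystem_prefixCylinders
    ?_ (by simp)
  rintro _ ⟨n, a, rfl⟩
  exact h n a

end PrefixCylinder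

section MuB

variable {b : ℕ → ℕ}

lemma muB_prefixCylinder_of_forall_mem {n : ℕ} {a : ℕ → ℤ}
    (ha : ∀ i < n, a i ∈ Icc 0 (b i : ℤ)) :
    muB b (prefixCylinder n a) = (basePow b n : ℝ≥0∞)⁻¹ := by
  have hset : digitMap b ⁻¹' prefixCylinder n a ∩ Ico 0 1 =
      {x ∈ Ico (0 : ℝ) 1 | ⌊x * basePow b n⌋ = digitsValue b a n} := by
    ext x
    simp only [mem_inter_iff, mem_preimage, prefixCylinder, mem_ofPred_eq]
    exact ⟨fun ⟨hd, hx⟩ => ⟨hx, (digitMap_eq_iff hx ha).1 hd⟩,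
      fun ⟨hx, h⟩ => ⟨(digitMap_eq_iff hx ha).2 h, hx⟩⟩
  rw [muB_apply (measurableSet_prefixCylinder n a), hset,
    volume_floor_mul_eq (basePow_pos b n) (digitsValue_mem_Ico ha)]

lemma muB_prefixCylinder_of_not_forall_mem {n : ℕ} {a : ℕ → ℤ}
    (ha : ¬ ∀ i < n, a i ∈ Icc 0 (b i : ℤ)) : muB b (prefixCylinder n a) = 0 := by
  have hset : digitMap b ⁻¹' prefixCylinder n a ∩ Ico 0 1 = ∅ :=
    eq_empty_of_forall_notMem fun x ⟨hd, _⟩ =>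
      ha fun i hi => hd i hi ▸ digitMap_mem_Icc x i
  rw [muB_apply (measurableSet_prefixCylinder n a), hset, measure_empty]

def digitBox (b : ℕ → ℕ) : Set (ℕ → ℤ) := Icc 0 fun n => (b n : ℤ)

lemma mem_digitBox {g : ℕ → ℤ} : g ∈ digitBox b ↔ ∀ n, g n ∈ Icc 0 (b n : ℤ) := by
  simp only [digitBox, mem_Icc, Pi.le_def, Pi.zero_apply, forall_and]

lemma isCompact_digitBox (b : ℕ → ℕ) : IsCompact (digitBox b) := isCompact_Icc

lemma muB_digitBox_compl (b : ℕ → ℕ) : muB b (digitBox b)ᶜ = 0 := by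
  have hset : digitMap b ⁻¹' (digitBox b)ᶜ = ∅ :=
    eq_empty_of_forall_notMem fun x hx => hx (mem_digitBox.2 (digitMap_mem_Icc x))
  rw [muB, Measure.map_apply (measurable_digitMap b)
    (isCompact_digitBox b).isClosed.measurableSet.compl, hset, measure_empty]

lemma setOf_digitMap_eq_subset_biUnion (n : ℕ) (v : ℤ) :
    {x ∈ Ico (0 : ℝ) 1 | digitMap b x n = v} ⊆
      ⋃ r ∈ Finset.range (basePow b n),
        {x ∈ Ico (0 : ℝ) 1 | ⌊x * basePow b (n + 1)⌋ = (b n + 1) * r + v} := by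
  rintro x ⟨hx, hd⟩
  have hN : (0 : ℝ) < basePow b n := Nat.cast_pos.2 (basePow_pos b n)
  have hlo : 0 ≤ ⌊x * basePow b n⌋ := Int.floor_nonneg.2 (mul_nonneg hx.1 hN.le)
  have hhi : ⌊x * basePow b n⌋ < basePow b n :=
    Int.floor_lt.2 (by push_cast; nlinarith [hx.2])
  refine mem_biUnion (x := ⌊x * basePow b n⌋.toNat) (Finset.mem_range.2 (by omega)) ⟨hx, ?_⟩
  rw [floor_mul_basePow_succ, Int.toNat_of_nonneg hlo, hd]

lemma muB_setOf_apply_eq_le (n : ℕ) (v : ℤ) :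
    muB b {g | g n = v} ≤ ((b n : ℝ≥0∞) + 1)⁻¹ := by
  have hmeas : MeasurableSet {g : ℕ → ℤ | g n = v} :=
    measurableSet_eq_fun (measurable_pi_apply n) measurable_const
  by_cases hv : v ∉ Icc 0 (b n : ℤ)
  · have hset : digitMap b ⁻¹' {g | g n = v} = ∅ :=
      eq_empty_of_forall_notMem fun x hx => hv (hx ▸ digitMap_mem_Icc x n)
    rw [muB, Measure.map_apply (measurable_digitMap b) hmeas, hset, measure_empty]
    exact zero_le
  rw [not_not] at hv
  set N := basePow b n
  have hpiece : ∀ r ∈ Finset.range N,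
      volume {x ∈ Ico (0 : ℝ) 1 | ⌊x * basePow b (n + 1)⌋ = (b n + 1) * r + v} =
        (basePow b (n + 1) : ℝ≥0∞)⁻¹ := by
    intro r hr
    refine volume_floor_mul_eq (basePow_pos b (n + 1)) ⟨by nlinarith [hv.1], ?_⟩
    have hr : (r : ℤ) + 1 ≤ N := by exact_mod_cast Finset.mem_range.1 hr
    rw [basePow_succ]; push_cast; nlinarith [hv.2]
  have hN : (N : ℝ≥0∞) ≠ 0 := by exact_mod_cast (basePow_pos b n).ne'
  calc muB b {g | g n = v}
      ≤ ∑ r ∈ Finset.range N, volume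
          {x ∈ Ico (0 : ℝ) 1 | ⌊x * basePow b (n + 1)⌋ = (b n + 1) * r + v} := by
        rw [muB_apply hmeas, inter_comm]
        exact (measure_mono (setOf_digitMap_eq_subset_biUnion n v)).trans
          (measure_biUnion_finset_le _ _)
    _ = N * ((N : ℝ≥0∞) * ((b n : ℝ≥0∞) + 1))⁻¹ := by
        rw [Finset.sum_congr rfl hpiece, Finset.sum_const, Finset.card_range, nsmul_eq_mul,
          basePow_succ]
        push_cast; rfl
    _ = ((b n : ℝ≥0∞) + 1)⁻¹ := by
        rw [ENNReal.mul_inv (Or.inl hN) (Or.inl (ENNReal.natCast_ne_top N)), ← mul_assoc,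
          ENNReal.mul_inv_cancel hN (ENNReal.natCast_ne_top N), one_mul]

lemma muB_setOf_apply_mem_le (n : ℕ) (T : Finset ℤ) :
    muB b {g | g n ∈ T} ≤ T.card * ((b n : ℝ≥0∞) + 1)⁻¹ := by
  have hset : {g : ℕ → ℤ | g n ∈ T} = ⋃ v ∈ T, {g | g n = v} := by ext g; simp
  calc muB b {g | g n ∈ T} ≤ ∑ v ∈ T, muB b {g | g n = v} := by
        rw [hset]; exact measure_biUnion_finset_le T _
    _ ≤ ∑ _v ∈ T, ((b n : ℝ≥0∞) + 1)⁻¹ :=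
        Finset.sum_le_sum fun v _ => muB_setOf_apply_eq_le n v
    _ = T.card * ((b n : ℝ≥0∞) + 1)⁻¹ := by rw [Finset.sum_const, nsmul_eq_mul]

end MuB

section JoinDigits

def joinDigits (q : ℕ → ℕ) (p : (ℕ → ℤ) × (ℕ → ℤ)) : ℕ → ℤ :=
  fun n => (q n + 1) * p.1 n + p.2 n

lemma measurable_joinDigits (q : ℕ → ℕ) : Measurable (joinDigits q) :=
  measurable_pi_lambda _ fun n =>
    (((measurable_pi_apply n).comp measurable_fst).const_mul _).add
      ((measurable_pi_apply n).comp measurable_snd)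

lemma basePow_mul_add (M q : ℕ → ℕ) (n : ℕ) :
    basePow (fun i => M i * (q i + 1) + q i) n = basePow M n * basePow q n := by
  simp only [basePow, ← Finset.prod_mul_distrib]
  exact Finset.prod_congr rfl fun i _ => by ring

lemma ediv_mem_Icc_iff {M q : ℕ} {a : ℤ} :
    a / (q + 1) ∈ Icc 0 (M : ℤ) ↔ a ∈ Icc 0 ((M * (q + 1) + q : ℕ) : ℤ) := by
  have hq : (0 : ℤ) < q + 1 := by positivity
  have hle : a / (q + 1) ≤ M ↔ a ≤ M * (q + 1) + q := by
    rw [← Int.lt_add_one_iff, Int.ediv_lt_iff_lt_mul hq]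
    constructor <;> intro h <;> linarith
  push_cast
  rw [mem_Icc, mem_Icc, Int.ediv_nonneg_iff_of_pos hq, hle]

lemma emod_mem_Icc (q : ℕ) (a : ℤ) : a % (q + 1) ∈ Icc 0 (q : ℤ) :=
  have hq : (0 : ℤ) < q + 1 := by positivity
  ⟨Int.emod_nonneg _ hq.ne', by have := Int.emod_lt_of_pos a hq; omega⟩

lemma joinDigits_preimage_prefixCylinder_inter (M q : ℕ → ℕ) (n : ℕ) (a : ℕ → ℤ) :
    joinDigits q ⁻¹' prefixCylinder n a ∩ digitBox M ×ˢ digitBox q =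
      (prefixCylinder n (fun i => a i / (q i + 1)) ∩ digitBox M) ×ˢ
        (prefixCylinder n (fun i => a i % (q i + 1)) ∩ digitBox q) := by
  ext ⟨j, d⟩
  simp only [mem_inter_iff, mem_preimage, mem_prod, prefixCylinder, mem_ofPred_eq, joinDigits]
  have hsplit : ∀ i, d i ∈ Icc 0 (q i : ℤ) →
      ((q i + 1) * j i + d i = a i ↔ a i / (q i + 1) = j i ∧ a i % (q i + 1) = d i) :=
    fun i hd => by
      rw [Int.ediv_emod_unique (by positivity)]
      exact ⟨fun h => ⟨by rw [← h]; ring, hd.1, by linarith [hd.2]⟩,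
        fun h => by linarith [h.1]⟩
  constructor
  · rintro ⟨h, hj, hd⟩
    have := fun i hi => (hsplit i (mem_digitBox.1 hd i)).1 (h i hi)
    exact ⟨⟨fun i hi => (this i hi).1.symm, hj⟩, fun i hi => (this i hi).2.symm, hd⟩
  · rintro ⟨⟨hj', hj⟩, hd', hd⟩
    exact ⟨fun i hi => (hsplit i (mem_digitBox.1 hd i)).2 ⟨(hj' i hi).symm, (hd' i hi).symm⟩,
      hj, hd⟩

lemma muB_eq_map_joinDigits (M q : ℕ → ℕ) :
    muB (fun n => M n * (q n + 1) + q n) = ((muB M).prod (muB q)).map (joinDigits q) := by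
  have := Measure.isProbabilityMeasure_map (μ := (muB M).prod (muB q))
    (measurable_joinDigits q).aemeasurable
  refine (ext_of_prefixCylinder fun n a => ?_).symm
  have hnull : (muB M).prod (muB q) (digitBox M ×ˢ digitBox q)ᶜ = 0 := by
    rw [compl_prod_eq_union]
    refine measure_union_null ?_ ?_ <;>
      simp [Measure.prod_prod, muB_digitBox_compl]
  rw [Measure.map_apply (measurable_joinDigits q) (measurableSet_prefixCylinder n a),
    ← measure_inter_conull hnull, joinDigits_preimage_prefixCylinder_inter, Measure.prod_prod,
    measure_inter_conull (muB_digitBox_compl M), measure_inter_conull (muB_digitBox_compl q)]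
  by_cases ha : ∀ i < n, a i / (q i + 1) ∈ Icc 0 (M i : ℤ)
  · rw [muB_prefixCylinder_of_forall_mem ha,
      muB_prefixCylinder_of_forall_mem fun i _ => emod_mem_Icc (q i) (a i),
      muB_prefixCylinder_of_forall_mem fun i hi => ediv_mem_Icc_iff.1 (ha i hi),
      basePow_mul_add, Nat.cast_mul, ENNReal.mul_inv (by simp) (by simp)]
  · rw [muB_prefixCylinder_of_not_forall_mem ha, zero_mul,
      muB_prefixCylinder_of_not_forall_mem fun h => ha fun i hi => ediv_mem_Icc_iff.2 (h i hi)]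

end JoinDigits

section Capacitability

variable {X : Type*}

def boundedProj (F : Set (X × (ℕ → ℕ))) (n : ℕ) (h : ℕ → ℕ) : Set X :=
  Prod.fst '' {p ∈ F | ∀ i < n, p.2 i ≤ h i}

variable {F : Set (X × (ℕ → ℕ))}

lemma boundedProj_zero (h : ℕ → ℕ) : boundedProj F 0 h = Prod.fst '' F := by
  simp [boundedProj]

lemma boundedProj_congr {n : ℕ} {h h' : ℕ → ℕ} (hh : ∀ i < n, h i = h' i) :
    boundedProj F n h = boundedProj F n h' := by
  simp +contextual only [boundedProj, hh]

lemma boundedProj_anti {n n' : ℕ} (hn : n ≤ n') (h : ℕ → ℕ) :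
    boundedProj F n' h ⊆ boundedProj F n h :=
  image_mono fun _ ⟨hp, hb⟩ => ⟨hp, fun i hi => hb i (hi.trans_le hn)⟩

lemma boundedProj_eq_iUnion_update (n : ℕ) (h : ℕ → ℕ) :
    boundedProj F n h = ⋃ k, boundedProj F (n + 1) (Function.update h n k) := by
  refine subset_antisymm ?_ (iUnion_subset fun k => ?_)
  · rintro _ ⟨p, ⟨hp, hb⟩, rfl⟩
    refine mem_iUnion.2 ⟨p.2 n, p, ⟨hp, fun i hi => ?_⟩, rfl⟩
    rcases Nat.lt_succ_iff_lt_or_eq.1 hi with hi | rfl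
    · rw [Function.update_of_ne hi.ne]; exact hb i hi
    · rw [Function.update_self]
  · rintro _ ⟨p, ⟨hp, hb⟩, rfl⟩
    refine ⟨p, ⟨hp, fun i hi => ?_⟩, rfl⟩
    simpa [Function.update_of_ne hi.ne] using hb i (by omega)

lemma monotone_boundedProj_update (n : ℕ) (h : ℕ → ℕ) :
    Monotone fun k => boundedProj F (n + 1) (Function.update h n k) := by
  intro k k' hk
  refine image_mono fun p ⟨hp, hb⟩ => ⟨hp, fun i hi => ?_⟩
  have := hb i hi
  rw [Function.update_apply] at this ⊢
  split_ifs at this ⊢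
  exacts [this.trans hk, this]

/-- The bound is chosen greedily, one coordinate at a time: by continuity of `μ` from below,
bounding coordinate `n` loses at most the `n`-th term of a positive series with sum `< ε`. -/
lemma exists_forall_measure_fst_image_le [MeasurableSpace X] (μ : Measure X) [IsFiniteMeasure μ]
    {ε : ℝ≥0∞} (hε : 0 < ε) :
    ∃ h : ℕ → ℕ, ∀ n, μ (Prod.fst '' F) ≤ μ (boundedProj F n h) + ε := by
  obtain ⟨ε', hε'pos, hε'sum⟩ := ENNReal.exists_pos_sum_of_countable' hε.ne' ℕ
  have step : ∀ n h, ∃ k,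
      μ (boundedProj F n h) < μ (boundedProj F (n + 1) (Function.update h n k)) + ε' n := by
    intro n h
    have hsup : μ (boundedProj F n h) + ε' n =
        ⨆ k, (μ (boundedProj F (n + 1) (Function.update h n k)) + ε' n) := by
      rw [← ENNReal.iSup_add, boundedProj_eq_iUnion_update n h,
        (monotone_boundedProj_update n h).measure_iUnion]
    exact lt_iSup_iff.1 ((ENNReal.lt_add_right (measure_ne_top μ _) (hε'pos n).ne').trans_eq hsup)
  choose k hk using step
  let hs : ℕ → ℕ → ℕ := fun n => Nat.rec 0 (fun m hm => Function.update hm m (k m hm)) n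
  have hs_succ : ∀ n, hs (n + 1) = Function.update (hs n) n (k n (hs n)) := fun _ => rfl
  have hs_eq : ∀ n, ∀ i < n, hs n i = hs (i + 1) i := by
    intro n
    induction n with
    | zero => intro i hi; omega
    | succ n ih =>
      intro i hi
      rcases Nat.lt_succ_iff_lt_or_eq.1 hi with hi | rfl
      · rw [hs_succ, Function.update_of_ne hi.ne]; exact ih i hi
      · rfl
  refine ⟨fun i => hs (i + 1) i, fun n => ?_⟩
  have hinv : ∀ n,
      μ (Prod.fst '' F) ≤ μ (boundedProj F n (hs n)) + ∑ i ∈ Finset.range n, ε' i := by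
    intro n
    induction n with
    | zero => simp [boundedProj_zero]
    | succ n ih =>
      rw [Finset.sum_range_succ, ← add_assoc, add_right_comm]
      refine ih.trans (by gcongr; exact (hk n (hs n)).le)
  calc μ (Prod.fst '' F)
      ≤ μ (boundedProj F n (hs n)) + ∑ i ∈ Finset.range n, ε' i := hinv n
    _ ≤ μ (boundedProj F n fun i => hs (i + 1) i) + ε := by
      rw [boundedProj_congr (hs_eq n)]
      gcongr
      exact (ENNReal.sum_le_tsum _).trans hε'sum.le

variable [TopologicalSpace X]

lemma isCompact_setOf_snd_le (hF : IsClosed F) {Z : Set X} (hZ : IsCompact Z)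
    (hFZ : ∀ p ∈ F, p.1 ∈ Z) (h : ℕ → ℕ) : IsCompact {p ∈ F | p.2 ≤ h} := by
  refine (hZ.prod (isCompact_Icc (a := ⊥) (b := h))).of_isClosed_subset
    (hF.inter (isClosed_le continuous_snd continuous_const))
    fun p hp => ⟨hFZ p hp.1, bot_le, hp.2⟩

/-- Points of `F` whose second coordinates are bounded by `h` on longer and longer prefixes all
lie in the compact set `{p ∈ F | p.2 ≤ H}` for a single `H`, so they have a limit point in `F`,
and that limit is bounded by `h` everywhere. -/
lemma iInter_closure_boundedProj_subset [FirstCountableTopology X] [T2Space X]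
    (hF : IsClosed F) {Z : Set X} (hZ : IsCompact Z) (hFZ : ∀ p ∈ F, p.1 ∈ Z)
    (h : ℕ → ℕ) :
    ⋂ n, closure (boundedProj F n h) ⊆ Prod.fst '' {p ∈ F | p.2 ≤ h} := by
  intro x hx
  obtain ⟨U, hU⟩ := (𝓝 x).exists_antitone_basis
  have hsel : ∀ n, ∃ p ∈ F, p.1 ∈ U n ∧ ∀ i < n, p.2 i ≤ h i := by
    intro n
    obtain ⟨_, hxU, p, ⟨hp, hb⟩, rfl⟩ :=
      mem_closure_iff_nhds.1 (mem_iInter.1 hx n) (U n) (hU.mem n)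
    exact ⟨p, hp, hxU, hb⟩
  choose p hpF hpU hpb using hsel
  let H : ℕ → ℕ := fun i => max (h i) ((Finset.range (i + 1)).sup fun n => (p n).2 i)
  have hpH : ∀ n, p n ∈ {q ∈ F | q.2 ≤ H} := by
    refine fun n => ⟨hpF n, fun i => ?_⟩
    rcases lt_or_ge i n with hi | hi
    · exact (hpb n i hi).trans (le_max_left _ _)
    · exact (Finset.le_sup (f := fun n => (p n).2 i) (Finset.mem_range.2 (by omega))).trans
        (le_max_right _ _)
  obtain ⟨y, ⟨hyF, -⟩, φ, hφ, hlim⟩ :=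
    (isCompact_setOf_snd_le hF hZ hFZ H).tendsto_subseq hpH
  have hfst : Tendsto (fun k => (p (φ k)).1) atTop (𝓝 x) :=
    hU.tendsto fun k => hU.antitone (hφ.id_le k) (hpU (φ k))
  refine ⟨y, ⟨hyF, fun i => ?_⟩,
    tendsto_nhds_unique ((continuous_fst.tendsto y).comp hlim) hfst⟩
  have hclosed : IsClosed {q : X × (ℕ → ℕ) | q.2 i ≤ h i} :=
    isClosed_le ((continuous_apply i).comp continuous_snd) continuous_const
  refine hclosed.mem_of_tendsto hlim ((eventually_gt_atTop i).mono fun k hk => ?_)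
  exact hpb (φ k) i (hk.trans_le (hφ.id_le k))

lemma exists_measure_fst_image_le_add [FirstCountableTopology X] [T2Space X] [MeasurableSpace X]
    [OpensMeasurableSpace X] (hF : IsClosed F) {Z : Set X} (hZ : IsCompact Z)
    (hFZ : ∀ p ∈ F, p.1 ∈ Z) (μ : Measure X) [IsFiniteMeasure μ] {ε : ℝ≥0∞}
    (hε : 0 < ε) :
    ∃ h : ℕ → ℕ, μ (Prod.fst '' F) ≤ μ (Prod.fst '' {p ∈ F | p.2 ≤ h}) + ε := by
  obtain ⟨h, hh⟩ := exists_forall_measure_fst_image_le μ hε (F := F)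
  refine ⟨h, ?_⟩
  have hinter : μ (⋂ n, closure (boundedProj F n h)) = ⨅ n, μ (closure (boundedProj F n h)) :=
    Antitone.measure_iInter (fun n n' hn => closure_mono (boundedProj_anti hn h))
      (fun _ => isClosed_closure.nullMeasurableSet) ⟨0, measure_ne_top μ _⟩
  calc μ (Prod.fst '' F) ≤ (⨅ n, μ (closure (boundedProj F n h))) + ε := by
        rw [ENNReal.iInf_add]
        exact le_iInf fun n => (hh n).trans (by gcongr; exact subset_closure)
    _ ≤ μ (Prod.fst '' {p ∈ F | p.2 ≤ h}) + ε := by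
        rw [← hinter]
        gcongr
        exact iInter_closure_boundedProj_subset hF hZ hFZ h

lemma exists_isCompact_subset_measure_fst_image_pos [FirstCountableTopology X] [T2Space X]
    [MeasurableSpace X] [OpensMeasurableSpace X] (hF : IsClosed F) {Z : Set X} (hZ : IsCompact Z)
    (hFZ : ∀ p ∈ F, p.1 ∈ Z) (μ : Measure X) [IsFiniteMeasure μ]
    (hpos : 0 < μ (Prod.fst '' F)) :
    ∃ K ⊆ F, IsCompact K ∧ 0 < μ (Prod.fst '' K) := by
  obtain ⟨h, hh⟩ := exists_measure_fst_image_le_add hF hZ hFZ μ (ENNReal.half_pos hpos.ne')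
  refine ⟨_, sep_subset _ _, isCompact_setOf_snd_le hF hZ hFZ h, pos_iff_ne_zero.2 fun h0 => ?_⟩
  rw [h0, zero_add] at hh
  exact (ENNReal.half_lt_self hpos.ne' (measure_ne_top μ _)).not_ge hh

lemma exists_isClosed_subset_measure_fst_image_le_add [PolishSpace X] [MeasurableSpace X]
    [BorelSpace X] (hF : IsClosed F) (μ : Measure X) [IsFiniteMeasure μ] {ε : ℝ≥0∞}
    (hε : 0 < ε) :
    ∃ C ⊆ Prod.fst '' F, IsClosed C ∧ μ (Prod.fst '' F) ≤ μ C + ε := by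
  have hε2 : 0 < ε / 2 := ENNReal.half_pos hε.ne'
  obtain ⟨Z, hZ, hZc⟩ := isTightMeasureSet_iff_exists_isCompact_measure_compl_le.1
    (isTightMeasureSet_singleton (μ := μ)) _ hε2
  have hFZ : IsClosed (F ∩ Z ×ˢ univ) := hF.inter (hZ.isClosed.prod isClosed_univ)
  obtain ⟨h, hh⟩ := exists_measure_fst_image_le_add hFZ hZ (fun p hp => hp.2.1) μ hε2
  refine ⟨_, image_mono fun p hp => hp.1.1,
    ((isCompact_setOf_snd_le hFZ hZ (fun p hp => hp.2.1) h).image continuous_fst).isClosed, ?_⟩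
  calc μ (Prod.fst '' F) ≤ μ (Prod.fst '' (F ∩ Z ×ˢ univ)) + μ Zᶜ := by
        refine (measure_mono fun x hx => ?_).trans (measure_union_le _ _)
        obtain ⟨p, hp, rfl⟩ := hx
        by_cases hpZ : p.1 ∈ Z
        exacts [Or.inl ⟨p, ⟨hp, hpZ, trivial⟩, rfl⟩, Or.inr hpZ]
    _ ≤ μ (Prod.fst '' {p ∈ F ∩ Z ×ˢ univ | p.2 ≤ h}) + ε / 2 + ε / 2 :=
        add_le_add hh (hZc μ rfl)
    _ = _ := by rw [add_assoc, ENNReal.add_halves]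

lemma nullMeasurableSet_fst_image [PolishSpace X] [MeasurableSpace X] [BorelSpace X]
    (hF : IsClosed F) (μ : Measure X) [IsFiniteMeasure μ] :
    NullMeasurableSet (Prod.fst '' F) μ := by
  choose C hCF hC hμC using fun n : ℕ => exists_isClosed_subset_measure_fst_image_le_add hF μ
    (ENNReal.inv_pos.2 (ENNReal.natCast_ne_top n))
  have hM : MeasurableSet (⋃ n, C n) := MeasurableSet.iUnion fun n => (hC n).measurableSet
  have hle : μ (Prod.fst '' F) ≤ μ (⋃ n, C n) := by
    refine ENNReal.le_of_forall_pos_le_add fun ε hε _ => ?_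
    obtain ⟨n, hn⟩ := ENNReal.exists_inv_nat_lt (a := ε) (by simpa using hε.ne')
    exact (hμC n).trans (add_le_add (measure_mono (subset_iUnion C n)) hn.le)
  exact hM.nullMeasurableSet.congr (ae_eq_of_subset_of_measure_ge (iUnion_subset hCF) hle
    hM.nullMeasurableSet (measure_ne_top μ _))

end Capacitability

section BorelCantelli

lemma exists_finset_card_le_of_abs_mul_sub_le (q : ℕ) (s : ℤ) :
    ∃ T : Finset ℤ, T.card ≤ 5 ∧ ∀ w : ℤ, |(q + 1) * w - s| ≤ 2 * q → w ∈ T := by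
  have hq : (0 : ℤ) < q + 1 := by positivity
  refine ⟨Finset.Icc (s / (q + 1) - 2) (s / (q + 1) + 2), by simp; omega, fun w hw => ?_⟩
  have hs := Int.mul_ediv_add_emod s (q + 1)
  have hr := emod_mem_Icc q s
  obtain ⟨h1, h2⟩ := abs_le.1 hw
  rw [Finset.mem_Icc]
  constructor <;> by_contra! h <;> nlinarith [hr.1, hr.2]

lemma ae_eventually_two_mul_lt_abs (q : ℕ → ℕ) (s : ℕ → ℤ) :
    ∀ᵐ j ∂muB (fun n => 5 * 2 ^ n),
      ∀ᶠ n in atTop, 2 * (q n : ℤ) < |(q n + 1) * j n - s n| := by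
  choose T hTcard hT using fun n => exists_finset_card_le_of_abs_mul_sub_le (q n) (s n)
  have hbad : ∀ n, muB (fun n => 5 * 2 ^ n) {j | j n ∈ T n} ≤ 2⁻¹ ^ n := by
    intro n
    calc muB (fun n => 5 * 2 ^ n) {j | j n ∈ T n}
        ≤ (T n).card * (((5 * 2 ^ n : ℕ) : ℝ≥0∞) + 1)⁻¹ :=
          muB_setOf_apply_mem_le n (T n)
      _ ≤ 5 * (5 * 2 ^ n)⁻¹ := by
        gcongr
        · exact_mod_cast hTcard n
        · push_cast; exact le_self_add
      _ = 2⁻¹ ^ n := by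
        rw [ENNReal.mul_inv (by simp) (by simp), ← mul_assoc,
          ENNReal.mul_inv_cancel (by simp) (by simp), one_mul, ENNReal.inv_pow]
  have hsum : ∑' n, muB (fun n => 5 * 2 ^ n) {j | j n ∈ T n} ≠ ⊤ :=
    ne_top_of_le_ne_top (by simp [ENNReal.tsum_geometric]) (ENNReal.tsum_le_tsum hbad)
  filter_upwards [ae_eventually_notMem hsum] with j hj
  exact hj.mono fun n hn => not_le.1 fun h => hn (hT n (j n) h)

lemma exists_measure_joinDigits_preimage_pos (M q : ℕ → ℕ) {C : Set (ℕ → ℤ)}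
    (hC : MeasurableSet C) (hpos : 0 < muB (fun n => M n * (q n + 1) + q n) C)
    {P : (ℕ → ℤ) → Prop} (hP : ∀ᵐ j ∂muB M, P j) :
    ∃ j, P j ∧ 0 < muB q {d | joinDigits q (j, d) ∈ C} := by
  rw [muB_eq_map_joinDigits, Measure.map_apply (measurable_joinDigits q) hC,
    Measure.prod_apply (measurable_joinDigits q hC)] at hpos
  by_contra! h
  have hzero : ∀ᵐ j ∂muB M, muB q (Prod.mk j ⁻¹' (joinDigits q ⁻¹' C)) = 0 :=
    hP.mono fun j hj => nonpos_iff_eq_zero.1 (h j hj)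
  rw [lintegral_congr_ae hzero, lintegral_zero] at hpos
  exact hpos.false

end BorelCantelli

section Construction

variable {F : Set ((ℕ → ℤ) × (ℕ → ℕ))}

lemma univMeasurable_fst_image (hF : IsClosed F) : UnivMeasurable (Prod.fst '' F) :=
  fun μ _ => nullMeasurableSet_fst_image hF μ

lemma exists_isCompact_measure_pos_of_not_isHaarNull (hF : IsClosed F)
    (hA : ¬ IsHaarNull (Prod.fst '' F)) (b : ℕ → ℕ) :
    ∃ s : ℕ → ℤ, ∃ K : Set ((ℕ → ℤ) × (ℕ → ℕ)), IsCompact K ∧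
      (∀ p ∈ K, (p.1 - s, p.2) ∈ F) ∧ 0 < muB b (Prod.fst '' K) := by
  obtain ⟨s, hs⟩ : ∃ s, muB b ((fun x => x + s) '' (Prod.fst '' F)) ≠ 0 := by
    by_contra! h
    exact hA ⟨_, muB b, subset_rfl, univMeasurable_fst_image hF, inferInstance, h⟩
  set F' := {p : (ℕ → ℤ) × (ℕ → ℕ) | (p.1 - s, p.2) ∈ F} ∩ digitBox b ×ˢ univ
  have hF' : IsClosed F' :=
    (hF.preimage ((continuous_fst.sub continuous_const).prodMk continuous_snd)).inter
      ((isCompact_digitBox b).isClosed.prod isClosed_univ)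
  have hcover : (fun x => x + s) '' (Prod.fst '' F) ⊆ Prod.fst '' F' ∪ (digitBox b)ᶜ := by
    rintro _ ⟨_, ⟨p, hp, rfl⟩, rfl⟩
    by_cases hpb : p.1 + s ∈ digitBox b
    · exact Or.inl ⟨(p.1 + s, p.2), ⟨by simpa using hp, hpb, trivial⟩, rfl⟩
    · exact Or.inr hpb
  have hpos : 0 < muB b (Prod.fst '' F') := by
    refine pos_iff_ne_zero.2 fun h0 => hs (measure_mono_null hcover ?_)
    exact measure_union_null h0 (muB_digitBox_compl b)
  obtain ⟨K, hKF', hK, hKpos⟩ := exists_isCompact_subset_measure_fst_image_pos hF'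
    (isCompact_digitBox b) (fun p hp => hp.2.1) (muB b) hpos
  exact ⟨s, K, hK, fun p hp => (hKF' hp).1, hKpos⟩

lemma exists_isCompact_translate_subset (hF : IsClosed F) (hA : ¬ IsHaarNull (Prod.fst '' F))
    (q : ℕ → ℕ) :
    ∃ t : ℕ → ℤ, ∃ K : Set ((ℕ → ℤ) × (ℕ → ℕ)), IsCompact K ∧
      (∀ᶠ n in atTop, 2 * (q n : ℤ) < |t n|) ∧ Prod.fst '' K ⊆ digitBox q ∧
      0 < muB q (Prod.fst '' K) ∧ ∀ p ∈ K, (p.1 + t, p.2) ∈ F := by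
  obtain ⟨s, K, hK, hKF, hKpos⟩ := exists_isCompact_measure_pos_of_not_isHaarNull hF hA
    (fun n => 5 * 2 ^ n * (q n + 1) + q n)
  obtain ⟨j, hj, hjpos⟩ := exists_measure_joinDigits_preimage_pos _ q
    (hK.image continuous_fst).isClosed.measurableSet hKpos (ae_eventually_two_mul_lt_abs q s)
  set σ : ℕ → ℤ := fun n => (q n + 1) * j n
  set K' := (fun p : (ℕ → ℤ) × (ℕ → ℕ) => (p.1 - σ, p.2)) '' K ∩ digitBox q ×ˢ univ
  have hK'fst : Prod.fst '' K' = {d | joinDigits q (j, d) ∈ Prod.fst '' K} ∩ digitBox q := by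
    have hjoin : ∀ d, joinDigits q (j, d) = d + σ := fun d => funext fun n => add_comm _ _
    ext d
    constructor
    · rintro ⟨_, ⟨⟨p, hp, rfl⟩, hbox, -⟩, rfl⟩
      exact ⟨⟨p, hp, by simp [hjoin]⟩, hbox⟩
    · rintro ⟨⟨p, hp, hpd⟩, hbox⟩
      have hd : p.1 - σ = d := by rw [hpd, hjoin, add_sub_cancel_right]
      exact ⟨(p.1 - σ, p.2), ⟨⟨p, hp, rfl⟩, hd ▸ hbox, trivial⟩, hd⟩
  refine ⟨fun n => σ n - s n, K', ?_, hj, ?_, ?_, ?_⟩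
  · exact (hK.image ((continuous_fst.sub continuous_const).prodMk continuous_snd)).inter_right
      ((isCompact_digitBox q).isClosed.prod isClosed_univ)
  · exact hK'fst ▸ inter_subset_right
  · rwa [hK'fst, measure_inter_conull (muB_digitBox_compl q)]
  · rintro _ ⟨⟨p, hp, rfl⟩, -⟩
    convert hKF p hp using 2
    ext n
    simp [σ]

end Construction

section Coding

def intToNat (m : ℤ) : ℕ := if 0 ≤ m then 2 * m.toNat else 2 * (-m).toNat - 1

lemma natToInt_intToNat (m : ℤ) : natToInt (intToNat m) = m := by
  unfold natToInt intToNat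
  split_ifs <;> omega

lemma abs_le_intToNat (m : ℤ) : |m| ≤ intToNat m := by
  unfold intToNat
  rw [abs_le]
  split_ifs <;> omega

def bijMapInv (x : (ℕ → ℕ) × (ℕ → ℤ) × (ℕ → ℤ)) (k : ℕ) : ℕ :=
  if k % 3 = 0 then x.1 (k / 3)
  else if k % 3 = 1 then intToNat (x.2.1 (k / 3)) else intToNat (x.2.2 (k / 3))

section

variable (x : (ℕ → ℕ) × (ℕ → ℤ) × (ℕ → ℤ)) (n : ℕ)

lemma bijMapInv_three_mul : bijMapInv x (3 * n) = x.1 n := by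
  simp [bijMapInv]

lemma bijMapInv_three_mul_add_one : bijMapInv x (3 * n + 1) = intToNat (x.2.1 n) := by
  simp [bijMapInv, show (3 * n + 1) % 3 = 1 by omega, show (3 * n + 1) / 3 = n by omega]

lemma bijMapInv_three_mul_add_two : bijMapInv x (3 * n + 2) = intToNat (x.2.2 n) := by
  simp [bijMapInv, show (3 * n + 2) % 3 = 2 by omega, show (3 * n + 2) / 3 = n by omega]

end

lemma bijMap_bijMapInv (x : (ℕ → ℕ) × (ℕ → ℤ) × (ℕ → ℤ)) :
    bijMap (bijMapInv x) = x := by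
  simp only [bijMap, bijMapInv_three_mul, bijMapInv_three_mul_add_one,
    bijMapInv_three_mul_add_two, natToInt_intToNat]

lemma evLE_bijMapInv {f : ℕ → ℕ} {x : (ℕ → ℕ) × (ℕ → ℤ) × (ℕ → ℤ)}
    (h : ∀ᶠ n in atTop, f (3 * n) ≤ x.1 n ∧ (f (3 * n + 1) : ℤ) ≤ |x.2.1 n| ∧
      (f (3 * n + 2) : ℤ) ≤ |x.2.2 n|) :
    EvLE f (bijMapInv x) := by
  obtain ⟨N, hN⟩ := eventually_atTop.1 h
  refine eventually_atTop.2 ⟨3 * N, fun k hk => ?_⟩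
  obtain ⟨m, r, hr, rfl⟩ : ∃ m r, r < 3 ∧ k = 3 * m + r :=
    ⟨k / 3, k % 3, Nat.mod_lt _ (by norm_num), (Nat.div_add_mod k 3).symm⟩
  obtain ⟨h0, h1, h2⟩ := hN m (by omega)
  have h1' := h1.trans (abs_le_intToNat _)
  have h2' := h2.trans (abs_le_intToNat _)
  interval_cases r
  · simpa [bijMapInv_three_mul] using h0
  · rw [bijMapInv_three_mul_add_one]; exact_mod_cast h1'
  · rw [bijMapInv_three_mul_add_two]; exact_mod_cast h2'

end Coding

/-- Let `F ⊆ ℤ^ω × ω^ω` be closed with non-Haar-null projection `A`, and let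
`ψ : 2^ω → K(ℤ^ω × ω^ω)` be any bijection onto the compact subsets. With
`bij f = (b, t, c)`, the set `D` of all `f` such that `(b,t,c) ∈ dom φ`
(i.e. `c − t ∈ 2^ω`, `2b ≤* |t|`, `proj(ψ(c−t)) ⊆ Π_n [0, b n]`, and
`μ_b(proj(ψ(c−t))) > 0`) and `φ(b,t,c) = ψ(c−t) +ᵖ t ⊆ F`, is dominating. -/
theorem coding_set_dominating
    (F : Set ((ℕ → ℤ) × (ℕ → ℕ))) (hF : IsClosed F)
    (hA : ¬ IsHaarNull (Prod.fst '' F))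
    (ψ : (ℕ → ℤ) → Set ((ℕ → ℤ) × (ℕ → ℕ)))
    (hψ : Set.BijOn ψ {z : ℕ → ℤ | ∀ n, z n = 0 ∨ z n = 1}
      {K : Set ((ℕ → ℤ) × (ℕ → ℕ)) | IsCompact K}) :
    Dominating {f : ℕ → ℕ |
      (∀ n : ℕ, (bijMap f).2.2 n - (bijMap f).2.1 n = 0 ∨
        (bijMap f).2.2 n - (bijMap f).2.1 n = 1) ∧
      (∀ᶠ n in Filter.atTop, 2 * ((bijMap f).1 n : ℤ) ≤ |(bijMap f).2.1 n|) ∧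
      (Prod.fst '' ψ ((bijMap f).2.2 - (bijMap f).2.1) ⊆
        {g : ℕ → ℤ | ∀ n, 0 ≤ g n ∧ g n ≤ ((bijMap f).1 n : ℤ)}) ∧
      0 < muB (bijMap f).1 (Prod.fst '' ψ ((bijMap f).2.2 - (bijMap f).2.1)) ∧
      (fun p : (ℕ → ℤ) × (ℕ → ℕ) => (p.1 + (bijMap f).2.1, p.2)) ''
        ψ ((bijMap f).2.2 - (bijMap f).2.1) ⊆ F} := by
  intro f
  set q : ℕ → ℕ := fun n => max (f (3 * n)) (max (f (3 * n + 1)) (f (3 * n + 2)))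
  obtain ⟨t, K, hK, ht, hKbox, hKpos, hKF⟩ := exists_isCompact_translate_subset hF hA q
  obtain ⟨z, hz, rfl⟩ := hψ.surjOn hK
  refine ⟨bijMapInv (q, t, t + z), ?_, evLE_bijMapInv ?_⟩
  · simp only [mem_ofPred_eq, bijMap_bijMapInv, add_sub_cancel_left]
    refine ⟨fun n => by simpa using hz n, ht.mono fun n hn => hn.le,
      fun g hg => mem_digitBox.1 (hKbox hg), hKpos, ?_⟩
    rintro _ ⟨p, hp, rfl⟩
    exact hKF p hp
  · filter_upwards [ht] with n hn
    have h1 : f (3 * n + 1) ≤ q n := (le_max_left _ _).trans (le_max_right _ _)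
    have h2 : f (3 * n + 2) ≤ q n := (le_max_right _ _).trans (le_max_right _ _)
    refine ⟨le_max_left _ _, by omega, ?_⟩
    rcases hz n with hzn | hzn <;> simp only [Pi.add_apply, hzn, add_zero] <;>
      cases abs_cases (t n) <;> cases abs_cases (t n + 1) <;> omega
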